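/- Let (b,o,c) be a magnetic Schrödinger graph over a discrete measure space (X,m), let d be an intrinsic pseudometric for b with finite jump size s > 0, and let K ⊆ X be a finite subset. Let λ ∈ ℝ satisfy λ·∑_{x∈X} m(x)|φ(x)|² ≤ Q(φ) for every φ : X → ℂ supported in K. Let ω : X → ℝ be bounded with |ω(x) − ω(y)| ≤ κ·d(x,y) for all x,y and some κ > 0. Let u : [0,∞) → (X → ℂ) be such that u_t is supported in K for every t, for each x ∈ K the map t ↦ u_t(x) is continuous on [0,∞) and differentiable on (0,∞), and (d/dt)u_t(x) = −ℋu_t(x) for all t > 0 and x ∈ K. Then the function t ↦ exp(2λt − (2t/s²)(cosh(κs/2) − 1))·∑_{x∈K} m(x)|u_t(x)|²·e^{ω(x)} is nonincreasing on [0,∞). -/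

import Mathlib

/-- The quadratic form of a magnetic Schrödinger graph:
`Q(φ) = (1/2)∑_{x,y} b(x,y)|φ(x) − o(x,y)φ(y)|² + ∑_x c(x)|φ(x)|²`. -/
noncomputable def QrForm {X : Type*} (b : X → X → ℝ) (o : X → X → ℂ) (c : X → ℝ)
    (φ : X → ℂ) : ℝ :=
  1 / 2 * ∑' z : X × X, b z.1 z.2 * ‖φ z.1 - o z.1 z.2 * φ z.2‖ ^ 2 +
    ∑' x, c x * ‖φ x‖ ^ 2

/-- The formal magnetic Schrödinger operator
`ℋf(x) = (1/m(x))∑_y b(x,y)(f(x) − o(x,y)f(y)) + (c(x)/m(x))f(x)`. -/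
noncomputable def schrodOp {X : Type*} (m : X → ℝ) (b : X → X → ℝ) (o : X → X → ℂ)
    (c : X → ℝ) (f : X → ℂ) : X → ℂ :=
  fun x => ((m x : ℝ) : ℂ)⁻¹ * (∑' y, ((b x y : ℝ) : ℂ) * (f x - o x y * f y)) +
    ((c x / m x : ℝ) : ℂ) * f x

lemma exp_half_sq (w : ℝ) : Real.exp (w / 2) ^ 2 = Real.exp w := by
  rw [sq, ← Real.exp_add]; ring_nf

lemma qterm (z w u' : ℂ) (h : ‖u'‖ = 1) :
    ‖z - u' * w‖ ^ 2 =
      ‖z‖ ^ 2 + ‖w‖ ^ 2 - 2 * (starRingEnd ℂ z * (u' * w)).re := by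
  rw [Complex.sq_norm, Complex.sq_norm, Complex.sq_norm, Complex.normSq_sub]
  have h1 : Complex.normSq (u' * w) = Complex.normSq w := by
    rw [Complex.normSq_mul, ← Complex.sq_norm u', h]; simp
  have h2 : (z * starRingEnd ℂ (u' * w)).re = (starRingEnd ℂ z * (u' * w)).re := by
    rw [← Complex.conj_re (z * starRingEnd ℂ (u' * w))]
    simp only [map_mul, RingHomCompTriple.comp_apply, Complex.conj_conj, RingHom.id_apply]
  rw [h1, h2]

lemma sumPairFin {X : Type*} (h : X × X → ℝ) (F : Finset X)
    (h0 : ∀ z : X × X, z.1 ∉ F ∨ z.2 ∉ F → h z = 0) :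
    Summable h ∧ ∑' z : X × X, h z = ∑ x ∈ F, ∑ y ∈ F, h (x, y) := by
  classical
  have hsupp : Function.support h ⊆ ↑(F ×ˢ F) := by
    intro z hz
    simp only [Function.mem_support] at hz
    simp only [Finset.coe_product, Set.mem_prod]
    by_contra hc
    rw [not_and_or] at hc
    exact hz (h0 z hc)
  constructor
  · exact summable_of_finite_support ((F ×ˢ F).finite_toSet.subset hsupp)
  · rw [tsum_eq_sum (s := F ×ˢ F) (fun z hz => ?_), Finset.sum_product]
    by_contra hc
    exact hz (hsupp (Function.mem_support.2 hc))

lemma sumPairLeft {X : Type*} (b : X → X → ℝ) (hb0 : ∀ x y, 0 ≤ b x y)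
    (hbsum : ∀ x, Summable fun y => b x y) (g : X → ℝ) (hgnn : ∀ x, 0 ≤ g x)
    (F : Finset X) (hg : ∀ x ∉ F, g x = 0) :
    Summable (fun z : X × X => b z.1 z.2 * g z.1) ∧
      ∑' z : X × X, b z.1 z.2 * g z.1 = ∑ x ∈ F, g x * ∑' y, b x y := by
  have hnn : (0 : X × X → ℝ) ≤ fun z : X × X => b z.1 z.2 * g z.1 :=
    fun z => mul_nonneg (hb0 _ _) (hgnn _)
  have hinner : ∀ x, ∑' y, b x y * g x = g x * ∑' y, b x y := by
    intro x; rw [tsum_mul_right, mul_comm]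
  have houter : Summable fun x => ∑' y, b x y * g x := by
    apply summable_of_finite_support
    apply F.finite_toSet.subset
    intro x hx
    simp only [Function.mem_support] at hx
    by_contra hc
    exact hx (by rw [hinner, hg x hc, zero_mul])
  have hsm : Summable (fun z : X × X => b z.1 z.2 * g z.1) :=
    (summable_prod_of_nonneg hnn).2 ⟨fun x => (hbsum x).mul_right (g x), houter⟩
  refine ⟨hsm, ?_⟩
  rw [Summable.tsum_prod hsm, tsum_congr hinner]
  exact tsum_eq_sum (fun x hx => by rw [hg x hx, zero_mul])

lemma sumPairRight {X : Type*} (b : X → X → ℝ) (hb0 : ∀ x y, 0 ≤ b x y)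
    (hbsymm : ∀ x y, b x y = b y x)
    (hbsum : ∀ x, Summable fun y => b x y) (g : X → ℝ) (hgnn : ∀ x, 0 ≤ g x)
    (F : Finset X) (hg : ∀ x ∉ F, g x = 0) :
    Summable (fun z : X × X => b z.1 z.2 * g z.2) ∧
      ∑' z : X × X, b z.1 z.2 * g z.2 = ∑ x ∈ F, g x * ∑' y, b x y := by
  obtain ⟨hs, ht⟩ := sumPairLeft b hb0 hbsum g hgnn F hg
  have hpt : ∀ z : X × X,
      (fun z : X × X => b z.1 z.2 * g z.1) ((Equiv.prodComm X X) z) = b z.1 z.2 * g z.2 := by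
    intro z
    simp only [Equiv.prodComm_apply, Prod.fst_swap, Prod.snd_swap]
    rw [hbsymm z.2 z.1]
  constructor
  · exact ((Equiv.prodComm X X).summable_iff.2 hs).congr hpt
  · calc ∑' z : X × X, b z.1 z.2 * g z.2
        = ∑' z : X × X, (fun z : X × X => b z.1 z.2 * g z.1) ((Equiv.prodComm X X) z) :=
          tsum_congr (fun z => (hpt z).symm)
      _ = ∑' z : X × X, b z.1 z.2 * g z.1 := by
          simpa using (Equiv.prodComm X X).tsum_eq (fun z : X × X => b z.1 z.2 * g z.1)
      _ = _ := ht

lemma convexOn_sinh' : ConvexOn ℝ (Set.Ici 0) Real.sinh := by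
  refine convexOn_of_deriv2_nonneg (convex_Ici 0) Real.continuous_sinh.continuousOn
    Real.differentiable_sinh.differentiableOn ?_ ?_
  · rw [Real.deriv_sinh]; exact Real.differentiable_cosh.differentiableOn
  · intro x hx
    rw [Function.iterate_succ, Function.iterate_one, Function.comp_apply, Real.deriv_sinh,
      Real.deriv_cosh]
    rw [interior_Ici] at hx
    exact Real.sinh_nonneg_iff.2 (le_of_lt hx)

lemma sinh_mul_le' (r t : ℝ) (hr0 : 0 ≤ r) (hr1 : r ≤ 1) (ht : 0 ≤ t) :
    Real.sinh (r * t) ≤ r * Real.sinh t := by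
  have h := convexOn_sinh'.2 (Set.mem_Ici.2 ht) (Set.mem_Ici.2 (le_refl (0:ℝ)))
    hr0 (by linarith : (0:ℝ) ≤ 1 - r) (by ring)
  simpa [Real.sinh_zero] using h

lemma cosh_sub_one' (x : ℝ) : Real.cosh x - 1 = 2 * Real.sinh (x / 2) ^ 2 := by
  have h : Real.cosh (2 * (x / 2)) = Real.cosh (x / 2) ^ 2 + Real.sinh (x / 2) ^ 2 :=
    Real.cosh_two_mul _
  rw [Real.cosh_sq] at h
  rw [show x = 2 * (x / 2) by ring, h]; ring

lemma cosh_ratio' (a A : ℝ) (ha : 0 ≤ a) (haA : a ≤ A) (hA : 0 < A) :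
    Real.cosh a - 1 ≤ (a / A) ^ 2 * (Real.cosh A - 1) := by
  rw [cosh_sub_one' a, cosh_sub_one' A]
  have h1 : Real.sinh (a / 2) ≤ (a / A) * Real.sinh (A / 2) := by
    have := sinh_mul_le' (a / A) (A / 2) (by positivity) (by
      rw [div_le_one hA]; exact haA) (by positivity)
    rw [show a / A * (A / 2) = a / 2 by field_simp] at this
    exact this
  have h2 : 0 ≤ Real.sinh (a / 2) := Real.sinh_nonneg_iff.2 (by positivity)
  nlinarith [Real.sinh_nonneg_iff.2 (show (0:ℝ) ≤ A / 2 by positivity), sq_nonneg (a/A)]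

lemma sq_exp_diff (p q : ℝ) :
    (Real.exp p - Real.exp q) ^ 2 = Real.exp (p + q) * (2 * (Real.cosh (p - q) - 1)) := by
  rw [Real.cosh_eq, Real.exp_neg, Real.exp_sub, Real.exp_add]
  have h1 := Real.exp_pos p
  have h2 := Real.exp_pos q
  field_simp
  ring

lemma termBound (Cs s κ dxy wx wy bxy rxy ax ay : ℝ)
    (hCs : Cs = Real.cosh (κ * s / 2) - 1)
    (hs : 0 < s) (hκ : 0 < κ) (hb : 0 ≤ bxy) (hd0 : 0 ≤ dxy)
    (hjump : 0 < bxy → dxy ≤ s) (hlip : |wx - wy| ≤ κ * dxy)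
    (hr : rxy ≤ ax * ay) (hax : 0 ≤ ax) (hay : 0 ≤ ay) :
    (Real.exp (wx / 2) - Real.exp (wy / 2)) ^ 2 * (bxy * rxy) ≤
      (Cs / s ^ 2) * (bxy * dxy ^ 2 *
        ((Real.exp (wx / 2) * ax) ^ 2 + (Real.exp (wy / 2) * ay) ^ 2)) := by
  have hCs0 : 0 ≤ Cs := by rw [hCs]; linarith [Real.one_le_cosh (κ * s / 2)]
  rcases eq_or_lt_of_le hb with hb' | hb'
  · rw [← hb']; simp
  · have hds : dxy ≤ s := hjump hb'
    have hcoshΔ : Real.cosh ((wx - wy) / 2) - 1 ≤ dxy ^ 2 / s ^ 2 * Cs := by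
      have h1 : Real.cosh ((wx - wy) / 2) ≤ Real.cosh (κ * dxy / 2) := by
        apply Real.cosh_le_cosh.2
        have e1 : |(wx - wy) / 2| = |wx - wy| / 2 := by
          rw [abs_div]; norm_num
        have e2 : |κ * dxy / 2| = κ * dxy / 2 := abs_of_nonneg (by positivity)
        rw [e1, e2]; linarith
      have h2 := cosh_ratio' (κ * dxy / 2) (κ * s / 2) (by positivity)
        (by nlinarith) (by positivity)
      have h3 : (κ * dxy / 2) / (κ * s / 2) = dxy / s := by
        field_simp
      rw [h3, ← hCs, div_pow] at h2
      linarith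
    have hsq : (Real.exp (wx / 2) - Real.exp (wy / 2)) ^ 2 =
        Real.exp (wx / 2) * Real.exp (wy / 2) * (2 * (Real.cosh ((wx - wy) / 2) - 1)) := by
      rw [sq_exp_diff, ← Real.exp_add, show wx / 2 - wy / 2 = (wx - wy) / 2 by ring]
    rw [hsq]
    set Ex := Real.exp (wx / 2) with hEx
    set Ey := Real.exp (wy / 2) with hEy
    have hEx0 : 0 < Ex := Real.exp_pos _
    have hEy0 : 0 < Ey := Real.exp_pos _
    have hC'0 : 0 ≤ Real.cosh ((wx - wy) / 2) - 1 := by linarith [Real.one_le_cosh ((wx-wy)/2)]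
    have step1 : Ex * Ey * (2 * (Real.cosh ((wx - wy) / 2) - 1)) * (bxy * rxy) ≤
        Ex * Ey * (2 * (Real.cosh ((wx - wy) / 2) - 1)) * (bxy * (ax * ay)) := by
      apply mul_le_mul_of_nonneg_left _ (by positivity)
      exact mul_le_mul_of_nonneg_left hr hb
    have step2 : Ex * Ey * (2 * (Real.cosh ((wx - wy) / 2) - 1)) * (bxy * (ax * ay)) ≤
        Ex * Ey * (2 * (dxy ^ 2 / s ^ 2 * Cs)) * (bxy * (ax * ay)) := by
      apply mul_le_mul_of_nonneg_right _ (by positivity)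
      apply mul_le_mul_of_nonneg_left _ (by positivity)
      linarith
    have step3 : Ex * Ey * (ax * ay) ≤ ((Ex * ax) ^ 2 + (Ey * ay) ^ 2) / 2 := by
      nlinarith [sq_nonneg (Ex * ax - Ey * ay)]
    have step4 : Ex * Ey * (2 * (dxy ^ 2 / s ^ 2 * Cs)) * (bxy * (ax * ay)) ≤
        (Cs / s ^ 2) * (bxy * dxy ^ 2 * ((Ex * ax) ^ 2 + (Ey * ay) ^ 2)) := by
      have hcoef : 0 ≤ 2 * (dxy ^ 2 / s ^ 2 * Cs) * bxy := by positivity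
      calc Ex * Ey * (2 * (dxy ^ 2 / s ^ 2 * Cs)) * (bxy * (ax * ay))
          = (2 * (dxy ^ 2 / s ^ 2 * Cs) * bxy) * (Ex * Ey * (ax * ay)) := by ring
        _ ≤ (2 * (dxy ^ 2 / s ^ 2 * Cs) * bxy) * (((Ex * ax) ^ 2 + (Ey * ay) ^ 2) / 2) :=
            mul_le_mul_of_nonneg_left step3 hcoef
        _ = (Cs / s ^ 2) * (bxy * dxy ^ 2 * ((Ex * ax) ^ 2 + (Ey * ay) ^ 2)) := by ring
    linarith
theorem keyIneq {X : Type*}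
    (m : X → ℝ) (hm : ∀ x, 0 < m x)
    (b : X → X → ℝ) (hb0 : ∀ x y, 0 ≤ b x y) (hbsymm : ∀ x y, b x y = b y x)
    (hbsum : ∀ x, Summable fun y => b x y)
    (o : X → X → ℂ) (ho1 : ∀ x y, ‖o x y‖ = 1)
    (hosymm : ∀ x y, o x y = starRingEnd ℂ (o y x))
    (c : X → ℝ)
    (d : X → X → ℝ) (hd_self : ∀ x, d x x = 0) (hd_symm : ∀ x y, d x y = d y x)
    (hd_tri : ∀ x y z, d x z ≤ d x y + d y z)
    (hd_sum : ∀ x, Summable fun y => b x y * d x y ^ 2)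
    (hd_intr : ∀ x, (∑' y, b x y * d x y ^ 2) ≤ m x)
    (s : ℝ) (hs : 0 < s) (hjump : ∀ x y, 0 < b x y → d x y ≤ s)
    (K : Set X) (hK : K.Finite)
    (lam : ℝ)
    (hlam : ∀ φ : X → ℂ, Function.support φ ⊆ K →
      lam * (∑' x, m x * ‖φ x‖ ^ 2) ≤ QrForm b o c φ)
    (ω : X → ℝ) (κ : ℝ) (hκ : 0 < κ) (hlip : ∀ x y, |ω x - ω y| ≤ κ * d x y)
    (v : X → ℂ) (hv : Function.support v ⊆ K) :
    (lam - (Real.cosh (κ * s / 2) - 1) / s ^ 2) *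
        ∑ x ∈ hK.toFinset, m x * ‖v x‖ ^ 2 * Real.exp (ω x) ≤
      ∑ x ∈ hK.toFinset, m x * Real.exp (ω x) *
        (starRingEnd ℂ (v x) * schrodOp m b o c v x).re := by
  classical
  set F := hK.toFinset with hFdef
  have hd0 : ∀ x y, 0 ≤ d x y := by
    intro x y
    have h := hd_tri x y x
    rw [hd_self, hd_symm y x] at h
    linarith
  have hv0 : ∀ x ∉ F, v x = 0 := by
    intro x hx
    by_contra h
    exact hx (hK.mem_toFinset.2 (hv h))
  set ψ : X → ℂ := fun x => ((Real.exp (ω x / 2) : ℝ) : ℂ) * v x with hψdef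
  have hψ0 : ∀ x ∉ F, ψ x = 0 := by
    intro x hx; simp [hψdef, hv0 x hx]
  have hψsupp : Function.support ψ ⊆ K := by
    intro x hx
    rw [Function.mem_support] at hx
    by_contra h
    exact hx (hψ0 x (fun hF => h (hK.mem_toFinset.1 hF)))
  have habs1 : ∀ x, ‖ψ x‖ = Real.exp (ω x / 2) * ‖v x‖ := by
    intro x
    simp only [hψdef]
    rw [norm_mul, Complex.norm_real, Real.norm_eq_abs, abs_of_pos (Real.exp_pos _)]
  have habs2 : ∀ x, ‖ψ x‖ ^ 2 = Real.exp (ω x) * ‖v x‖ ^ 2 := by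
    intro x; rw [habs1, mul_pow, exp_half_sq]
  -- symmetry and bound for the interaction term
  have hr_symm : ∀ x y, (starRingEnd ℂ (v y) * (o y x * v x)).re =
      (starRingEnd ℂ (v x) * (o x y * v y)).re := by
    intro x y
    rw [← Complex.conj_re (starRingEnd ℂ (v y) * (o y x * v x))]
    simp only [map_mul, Complex.conj_conj, ← hosymm]
    ring_nf
  have hr_le : ∀ x y, (starRingEnd ℂ (v x) * (o x y * v y)).re ≤
      ‖v x‖ * ‖v y‖ := by
    intro x y
    calc (starRingEnd ℂ (v x) * (o x y * v y)).re
        ≤ ‖starRingEnd ℂ (v x) * (o x y * v y)‖ := Complex.re_le_norm _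
      _ = ‖v x‖ * ‖v y‖ := by
          simp [map_mul, ho1]
  -- Q-form expansion
  obtain ⟨hsL, htL⟩ := sumPairLeft b hb0 hbsum (fun x => ‖ψ x‖ ^ 2)
    (fun x => sq_nonneg _) F (fun x hx => by simp [hψ0 x hx])
  obtain ⟨hsR, htR⟩ := sumPairRight b hb0 hbsymm hbsum (fun x => ‖ψ x‖ ^ 2)
    (fun x => sq_nonneg _) F (fun x hx => by simp [hψ0 x hx])
  obtain ⟨hs3, ht3⟩ := sumPairFin
    (fun z : X × X => b z.1 z.2 * (starRingEnd ℂ (ψ z.1) * (o z.1 z.2 * ψ z.2)).re) F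
    (by
      intro z hz
      rcases hz with h | h
      · simp [hψ0 _ h]
      · simp [hψ0 _ h])
  have hQ : QrForm b o c ψ = (∑ x ∈ F, ‖ψ x‖ ^ 2 * ∑' y, b x y)
      - (∑ x ∈ F, ∑ y ∈ F, b x y * (starRingEnd ℂ (ψ x) * (o x y * ψ y)).re)
      + ∑ x ∈ F, c x * ‖ψ x‖ ^ 2 := by
    unfold QrForm
    have hterm : ∀ z : X × X, b z.1 z.2 * ‖ψ z.1 - o z.1 z.2 * ψ z.2‖ ^ 2 =
        b z.1 z.2 * ‖ψ z.1‖ ^ 2 + b z.1 z.2 * ‖ψ z.2‖ ^ 2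
          - 2 * (b z.1 z.2 * (starRingEnd ℂ (ψ z.1) * (o z.1 z.2 * ψ z.2)).re) := by
      intro z; rw [qterm _ _ _ (ho1 _ _)]; ring
    rw [tsum_congr hterm, Summable.tsum_sub (hsL.add hsR) (hs3.mul_left 2), Summable.tsum_add hsL hsR,
      tsum_mul_left, htL, htR, ht3,
      tsum_eq_sum (s := F) (f := fun x => c x * ‖ψ x‖ ^ 2)
        (fun x hx => by simp [hψ0 x hx])]
    ring
  -- lower bound from hlam
  have hlamψ := hlam ψ hψsupp
  rw [tsum_eq_sum (s := F) (f := fun x => m x * ‖ψ x‖ ^ 2)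
    (fun x hx => by simp [hψ0 x hx])] at hlamψ
  -- operator sum expansion
  have hAx : ∀ x, (∑' y, ((b x y : ℝ) : ℂ) * (v x - o x y * v y)) =
      (((∑' y, b x y : ℝ)) : ℂ) * v x - ∑ y ∈ F, ((b x y : ℝ) : ℂ) * (o x y * v y) := by
    intro x
    have hsum1 : Summable fun y => ((b x y : ℝ) : ℂ) * v x :=
      (Complex.summable_ofReal.2 (hbsum x)).mul_right _
    have hsum2 : Summable fun y => ((b x y : ℝ) : ℂ) * (o x y * v y) := by
      apply summable_of_finite_support
      apply F.finite_toSet.subset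
      intro y hy
      simp only [Function.mem_support] at hy
      by_contra hyF
      exact hy (by rw [hv0 y hyF]; simp)
    have heq : (fun y => ((b x y : ℝ) : ℂ) * (v x - o x y * v y)) =
        fun y => ((b x y : ℝ) : ℂ) * v x - ((b x y : ℝ) : ℂ) * (o x y * v y) := by
      funext y; ring
    rw [heq, Summable.tsum_sub hsum1 hsum2, tsum_mul_right, ← Complex.ofReal_tsum]
    congr 1
    exact tsum_eq_sum (fun y hy => by simp [hv0 y hy])
  have hWx : ∀ x, m x * Real.exp (ω x) * (starRingEnd ℂ (v x) * schrodOp m b o c v x).re =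
      (Real.exp (ω x) * ‖v x‖ ^ 2) * (∑' y, b x y)
        - Real.exp (ω x) * ∑ y ∈ F, b x y * (starRingEnd ℂ (v x) * (o x y * v y)).re
        + c x * (Real.exp (ω x) * ‖v x‖ ^ 2) := by
    intro x
    have hmx : (m x : ℝ) ≠ 0 := (hm x).ne'
    have hmz : ((m x : ℝ) : ℂ) * (starRingEnd ℂ (v x) * schrodOp m b o c v x) =
        ((∑' y, b x y : ℝ) : ℂ) * (starRingEnd ℂ (v x) * v x)
          - ∑ y ∈ F, ((b x y : ℝ) : ℂ) * (starRingEnd ℂ (v x) * (o x y * v y))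
          + ((c x : ℝ) : ℂ) * (starRingEnd ℂ (v x) * v x) := by
      simp only [schrodOp, hAx]
      rw [Complex.ofReal_div]
      have hmz' : ((m x : ℝ) : ℂ) ≠ 0 := by exact_mod_cast hmx
      field_simp
      have hsum : ∑ y ∈ F, ((b x y : ℝ) : ℂ) * (starRingEnd ℂ (v x) * (o x y * v y))
          = starRingEnd ℂ (v x) * ∑ y ∈ F, ((b x y : ℝ) : ℂ) * (o x y * v y) := by
        rw [Finset.mul_sum]; exact Finset.sum_congr rfl (fun y _ => by ring)
      rw [mul_add, mul_sub, Finset.mul_sum]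
      rw [Finset.sum_congr rfl (fun y _ => show starRingEnd ℂ (v x) * (((b x y : ℝ) : ℂ) * o x y * v y) = starRingEnd ℂ (v x) * ((b x y : ℝ) : ℂ) * o x y * v y by ring)]
      ring
    have hre : m x * (starRingEnd ℂ (v x) * schrodOp m b o c v x).re =
        (((m x : ℝ) : ℂ) * (starRingEnd ℂ (v x) * schrodOp m b o c v x)).re := by
      rw [Complex.re_ofReal_mul]
    have hcvv : starRingEnd ℂ (v x) * v x = ((‖v x‖ ^ 2 : ℝ) : ℂ) := by
      rw [mul_comm, Complex.mul_conj, Complex.sq_norm]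
    have hgoal : (((m x : ℝ) : ℂ) * (starRingEnd ℂ (v x) * schrodOp m b o c v x)).re =
        ‖v x‖ ^ 2 * (∑' y, b x y)
          - ∑ y ∈ F, b x y * (starRingEnd ℂ (v x) * (o x y * v y)).re
          + c x * ‖v x‖ ^ 2 := by
      rw [hmz, hcvv]
      simp only [Complex.add_re, Complex.sub_re, Complex.re_ofReal_mul, Complex.re_sum,
        Complex.ofReal_re]
      ring
    calc m x * Real.exp (ω x) * (starRingEnd ℂ (v x) * schrodOp m b o c v x).re
        = Real.exp (ω x) * (m x * (starRingEnd ℂ (v x) * schrodOp m b o c v x).re) := by ring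
      _ = _ := by rw [hre, hgoal]; ring
  have hW : (∑ x ∈ F, m x * Real.exp (ω x) * (starRingEnd ℂ (v x) * schrodOp m b o c v x).re) =
      (∑ x ∈ F, ‖ψ x‖ ^ 2 * ∑' y, b x y)
        - (∑ x ∈ F, ∑ y ∈ F,
            Real.exp (ω x) * (b x y * (starRingEnd ℂ (v x) * (o x y * v y)).re))
        + ∑ x ∈ F, c x * ‖ψ x‖ ^ 2 := by
    rw [Finset.sum_congr rfl (fun x _ => hWx x)]
    rw [Finset.sum_add_distrib, Finset.sum_sub_distrib]
    congr 1
    · congr 1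
      · exact Finset.sum_congr rfl (fun x _ => by rw [habs2 x])
      · exact Finset.sum_congr rfl (fun x _ => by rw [Finset.mul_sum])
    · exact Finset.sum_congr rfl (fun x _ => by rw [habs2 x])
  -- the core estimate
  have hs3pt : ∀ x y, b x y * (starRingEnd ℂ (ψ x) * (o x y * ψ y)).re
      = b x y * (Real.exp (ω x / 2) * Real.exp (ω y / 2))
          * (starRingEnd ℂ (v x) * (o x y * v y)).re := by
    intro x y
    have hz : starRingEnd ℂ (ψ x) * (o x y * ψ y) =
        ((Real.exp (ω x / 2) * Real.exp (ω y / 2) : ℝ) : ℂ)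
          * (starRingEnd ℂ (v x) * (o x y * v y)) := by
      simp only [hψdef, map_mul, Complex.conj_ofReal]
      push_cast
      ring
    rw [hz, Complex.re_ofReal_mul]
    ring
  have hswap : (∑ x ∈ F, ∑ y ∈ F,
        Real.exp (ω x) * (b x y * (starRingEnd ℂ (v x) * (o x y * v y)).re))
      = ∑ x ∈ F, ∑ y ∈ F,
          Real.exp (ω y) * (b x y * (starRingEnd ℂ (v x) * (o x y * v y)).re) := by
    rw [Finset.sum_comm]
    exact Finset.sum_congr rfl (fun x _ => Finset.sum_congr rfl
      (fun y _ => by rw [hbsymm y x, hr_symm x y]))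
  have hcore : (∑ x ∈ F, ∑ y ∈ F,
        Real.exp (ω x) * (b x y * (starRingEnd ℂ (v x) * (o x y * v y)).re))
      - (∑ x ∈ F, ∑ y ∈ F, b x y * (starRingEnd ℂ (ψ x) * (o x y * ψ y)).re)
      ≤ ((Real.cosh (κ * s / 2) - 1) / s ^ 2) * ∑ x ∈ F, m x * ‖ψ x‖ ^ 2 := by
    have h2 : 2 * ((∑ x ∈ F, ∑ y ∈ F,
          Real.exp (ω x) * (b x y * (starRingEnd ℂ (v x) * (o x y * v y)).re))
        - (∑ x ∈ F, ∑ y ∈ F, b x y * (starRingEnd ℂ (ψ x) * (o x y * ψ y)).re))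
        = ∑ x ∈ F, ∑ y ∈ F, (Real.exp (ω x / 2) - Real.exp (ω y / 2)) ^ 2
            * (b x y * (starRingEnd ℂ (v x) * (o x y * v y)).re) := by
      rw [two_mul]
      nth_rewrite 2 [hswap]
      rw [show ∀ (A B C : ℝ), (A - C) + (B - C) = A + B - 2 * C from fun A B C => by ring]
      rw [← Finset.sum_add_distrib]
      rw [show (2 : ℝ) * ∑ x ∈ F, ∑ y ∈ F,
          b x y * (starRingEnd ℂ (ψ x) * (o x y * ψ y)).re
          = ∑ x ∈ F, ∑ y ∈ F, 2 * (b x y * (starRingEnd ℂ (ψ x) * (o x y * ψ y)).re) from by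
        rw [Finset.mul_sum]; exact Finset.sum_congr rfl (fun x _ => by rw [Finset.mul_sum])]
      rw [← Finset.sum_sub_distrib]
      refine Finset.sum_congr rfl (fun x _ => ?_)
      rw [← Finset.sum_add_distrib, ← Finset.sum_sub_distrib]
      refine Finset.sum_congr rfl (fun y _ => ?_)
      rw [hs3pt x y, ← exp_half_sq (ω x), ← exp_half_sq (ω y)]
      ring
    have hbound : ∑ x ∈ F, ∑ y ∈ F, (Real.exp (ω x / 2) - Real.exp (ω y / 2)) ^ 2
            * (b x y * (starRingEnd ℂ (v x) * (o x y * v y)).re)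
        ≤ ∑ x ∈ F, ∑ y ∈ F, ((Real.cosh (κ * s / 2) - 1) / s ^ 2)
            * (b x y * d x y ^ 2 * (‖ψ x‖ ^ 2 + ‖ψ y‖ ^ 2)) := by
      refine Finset.sum_le_sum (fun x _ => Finset.sum_le_sum (fun y _ => ?_))
      have := termBound (Real.cosh (κ * s / 2) - 1) s κ (d x y) (ω x) (ω y) (b x y)
        ((starRingEnd ℂ (v x) * (o x y * v y)).re) (‖v x‖) (‖v y‖)
        rfl hs hκ (hb0 x y) (hd0 x y) (hjump x y) (hlip x y) (hr_le x y)
        (norm_nonneg _) (norm_nonneg _)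
      rw [habs2 x, habs2 y, ← exp_half_sq (ω x), ← exp_half_sq (ω y)]
      calc _ ≤ ((Real.cosh (κ * s / 2) - 1) / s ^ 2) * (b x y * d x y ^ 2 *
          ((Real.exp (ω x / 2) * ‖v x‖) ^ 2
            + (Real.exp (ω y / 2) * ‖v y‖) ^ 2)) := this
        _ = _ := by ring
    have hsplit : ∑ x ∈ F, ∑ y ∈ F, ((Real.cosh (κ * s / 2) - 1) / s ^ 2)
            * (b x y * d x y ^ 2 * (‖ψ x‖ ^ 2 + ‖ψ y‖ ^ 2))
        ≤ 2 * (((Real.cosh (κ * s / 2) - 1) / s ^ 2)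
            * ∑ x ∈ F, m x * ‖ψ x‖ ^ 2) := by
      have hCs0 : (0:ℝ) ≤ Real.cosh (κ * s / 2) - 1 := by
        linarith [Real.one_le_cosh (κ * s / 2)]
      have hsw2 : ∑ x ∈ F, ∑ y ∈ F, b x y * d x y ^ 2 * ‖ψ y‖ ^ 2
          = ∑ x ∈ F, ∑ y ∈ F, b x y * d x y ^ 2 * ‖ψ x‖ ^ 2 := by
        rw [Finset.sum_comm]
        exact Finset.sum_congr rfl (fun x _ => Finset.sum_congr rfl
          (fun y _ => by rw [hbsymm y x, hd_symm y x]))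
      have hcol : ∑ x ∈ F, ∑ y ∈ F, b x y * d x y ^ 2 * ‖ψ x‖ ^ 2
          ≤ ∑ x ∈ F, m x * ‖ψ x‖ ^ 2 := by
        refine Finset.sum_le_sum (fun x _ => ?_)
        have h1 : ∑ y ∈ F, b x y * d x y ^ 2 * ‖ψ x‖ ^ 2
            = (∑ y ∈ F, b x y * d x y ^ 2) * ‖ψ x‖ ^ 2 := by
          rw [Finset.sum_mul]
        rw [h1]
        have h2 : (∑ y ∈ F, b x y * d x y ^ 2) ≤ m x := by
          refine le_trans (Summable.sum_le_tsum F (fun y _ => mul_nonneg (hb0 x y) (sq_nonneg _))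
            (hd_sum x)) (hd_intr x)
        exact mul_le_mul_of_nonneg_right h2 (sq_nonneg _)
      calc ∑ x ∈ F, ∑ y ∈ F, ((Real.cosh (κ * s / 2) - 1) / s ^ 2)
            * (b x y * d x y ^ 2 * (‖ψ x‖ ^ 2 + ‖ψ y‖ ^ 2))
          = ((Real.cosh (κ * s / 2) - 1) / s ^ 2) *
            ((∑ x ∈ F, ∑ y ∈ F, b x y * d x y ^ 2 * ‖ψ x‖ ^ 2)
              + ∑ x ∈ F, ∑ y ∈ F, b x y * d x y ^ 2 * ‖ψ y‖ ^ 2) := by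
            rw [← Finset.sum_add_distrib, Finset.mul_sum]
            refine Finset.sum_congr rfl (fun x _ => ?_)
            rw [← Finset.sum_add_distrib, Finset.mul_sum]
            refine Finset.sum_congr rfl (fun y _ => by ring)
        _ = ((Real.cosh (κ * s / 2) - 1) / s ^ 2) *
            (2 * ∑ x ∈ F, ∑ y ∈ F, b x y * d x y ^ 2 * ‖ψ x‖ ^ 2) := by
            rw [hsw2]; ring
        _ ≤ 2 * (((Real.cosh (κ * s / 2) - 1) / s ^ 2)
            * ∑ x ∈ F, m x * ‖ψ x‖ ^ 2) := by
            have hfrac : (0:ℝ) ≤ (Real.cosh (κ * s / 2) - 1) / s ^ 2 := by positivity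
            nlinarith [mul_le_mul_of_nonneg_left hcol hfrac]
    linarith [h2, hbound, hsplit]
  -- conclusion
  have hMv : ∑ x ∈ F, m x * ‖ψ x‖ ^ 2
      = ∑ x ∈ F, m x * ‖v x‖ ^ 2 * Real.exp (ω x) := by
    exact Finset.sum_congr rfl (fun x _ => by rw [habs2 x]; ring)
  rw [← hMv]
  rw [hQ] at hlamψ
  have hfin := hW
  nlinarith [hlamψ, hcore, hfin]

lemma hasDerivAt_abs_sq {f : ℝ → ℂ} {f' : ℂ} {t : ℝ} (hf : HasDerivAt f f' t) :
    HasDerivAt (fun t => ‖f t‖ ^ 2) (2 * (starRingEnd ℂ (f t) * f').re) t := by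
  have hre : HasDerivAt (fun t => (f t).re) f'.re t := by
    simpa [Function.comp_def] using Complex.reCLM.hasFDerivAt.comp_hasDerivAt t hf
  have him : HasDerivAt (fun t => (f t).im) f'.im t := by
    simpa [Function.comp_def] using Complex.imCLM.hasFDerivAt.comp_hasDerivAt t hf
  have h := (hre.fun_pow 2).fun_add (him.fun_pow 2)
  have hfun : (fun t => ‖f t‖ ^ 2) = fun t => (f t).re ^ 2 + (f t).im ^ 2 := by
    funext t; rw [Complex.sq_norm, Complex.normSq_apply]; ring
  rw [hfun]
  refine h.congr_deriv ?_
  simp only [Complex.mul_re, Complex.conj_re, Complex.conj_im]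
  ring
/-- **energy decay on finite subsets.** Let `K ⊆ X` be finite, `λ` a lower
bound for the form on functions supported in `K`, `ω` a bounded `κ`-Lipschitz function and
`u` a solution of the parabolic equation on `K`. Then
`t ↦ exp(2λt − (2t/s²)(cosh(κs/2) − 1))·∑_{x∈K} m(x)|u_t(x)|²·e^{ω(x)}` is nonincreasing
on `[0,∞)`. -/
theorem stmt5 {X : Type*} [Countable X]
    (m : X → ℝ) (hm : ∀ x, 0 < m x)
    (b : X → X → ℝ) (hb0 : ∀ x y, 0 ≤ b x y) (hbsymm : ∀ x y, b x y = b y x)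
    (hbdiag : ∀ x, b x x = 0) (hbsum : ∀ x, Summable fun y => b x y)
    (o : X → X → ℂ) (ho1 : ∀ x y, ‖o x y‖ = 1)
    (hosymm : ∀ x y, o x y = starRingEnd ℂ (o y x))
    (c : X → ℝ)
    (d : X → X → ℝ) (hd_self : ∀ x, d x x = 0) (hd_symm : ∀ x y, d x y = d y x)
    (hd_tri : ∀ x y z, d x z ≤ d x y + d y z)
    (hd_sum : ∀ x, Summable fun y => b x y * d x y ^ 2)
    (hd_intr : ∀ x, (∑' y, b x y * d x y ^ 2) ≤ m x)
    (s : ℝ) (hs : 0 < s) (hjump : ∀ x y, 0 < b x y → d x y ≤ s)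
    (K : Set X) (hK : K.Finite)
    (lam : ℝ)
    (hlam : ∀ φ : X → ℂ, Function.support φ ⊆ K →
      lam * (∑' x, m x * ‖φ x‖ ^ 2) ≤ QrForm b o c φ)
    (ω : X → ℝ) (B : ℝ) (hωbd : ∀ x, |ω x| ≤ B)
    (κ : ℝ) (hκ : 0 < κ) (hlip : ∀ x y, |ω x - ω y| ≤ κ * d x y)
    (u : ℝ → X → ℂ)
    (husupp : ∀ t : ℝ, Function.support (u t) ⊆ K)
    (hucont : ∀ x ∈ K, ContinuousOn (fun t => u t x) (Set.Ici (0 : ℝ)))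
    (huderiv : ∀ x ∈ K, ∀ t : ℝ, 0 < t →
      HasDerivAt (fun t' => u t' x) (-(schrodOp m b o c (u t) x)) t) :
    AntitoneOn (fun t =>
      Real.exp (2 * lam * t - 2 * t / s ^ 2 * (Real.cosh (κ * s / 2) - 1)) *
        ∑ x ∈ hK.toFinset, m x * ‖u t x‖ ^ 2 * Real.exp (ω x))
      (Set.Ici (0 : ℝ)) := by
  classical
  have hCs0 : (0:ℝ) ≤ Real.cosh (κ * s / 2) - 1 := by
    linarith [Real.one_le_cosh (κ * s / 2)]
  set β : ℝ := 2 * lam - 2 * (Real.cosh (κ * s / 2) - 1) / s ^ 2 with hβdef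
  have hexp_eq : ∀ t : ℝ, 2 * lam * t - 2 * t / s ^ 2 * (Real.cosh (κ * s / 2) - 1) = β * t := by
    intro t; rw [hβdef]; ring
  -- derivative of each summand at t > 0
  have hderiv : ∀ t : ℝ, 0 < t → HasDerivAt
      (fun t' => Real.exp (2 * lam * t' - 2 * t' / s ^ 2 * (Real.cosh (κ * s / 2) - 1)) *
        ∑ x ∈ hK.toFinset, m x * ‖u t' x‖ ^ 2 * Real.exp (ω x))
      (β * Real.exp (β * t) * (∑ x ∈ hK.toFinset, m x * ‖u t x‖ ^ 2 * Real.exp (ω x))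
        + Real.exp (β * t) * ∑ x ∈ hK.toFinset,
            m x * (2 * (starRingEnd ℂ (u t x) * (-(schrodOp m b o c (u t) x))).re)
              * Real.exp (ω x)) t := by
    intro t ht
    have hE : HasDerivAt
        (fun t' => Real.exp (2 * lam * t' - 2 * t' / s ^ 2 * (Real.cosh (κ * s / 2) - 1)))
        (β * Real.exp (β * t)) t := by
      have h1 : HasDerivAt (fun t' : ℝ => β * t') β t := by
        simpa using (hasDerivAt_id t).const_mul β
      have h2 := h1.exp
      have heq : (fun t' : ℝ => Real.exp (β * t')) =
          fun t' => Real.exp (2 * lam * t' - 2 * t' / s ^ 2 * (Real.cosh (κ * s / 2) - 1)) := by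
        funext t'; rw [hexp_eq t']
      rw [heq] at h2
      simpa [mul_comm] using h2
    have hF : HasDerivAt
        (fun t' => ∑ x ∈ hK.toFinset, m x * ‖u t' x‖ ^ 2 * Real.exp (ω x))
        (∑ x ∈ hK.toFinset,
          m x * (2 * (starRingEnd ℂ (u t x) * (-(schrodOp m b o c (u t) x))).re)
            * Real.exp (ω x)) t := by
      apply HasDerivAt.fun_sum
      intro x hx
      have hxK : x ∈ K := hK.mem_toFinset.1 hx
      exact ((hasDerivAt_abs_sq (huderiv x hxK t ht)).const_mul (m x)).mul_const _
    simpa [hexp_eq t] using hE.fun_mul hF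
  -- the derivative is nonpositive
  have hdnn : ∀ t : ℝ, 0 < t →
      β * Real.exp (β * t) * (∑ x ∈ hK.toFinset, m x * ‖u t x‖ ^ 2 * Real.exp (ω x))
        + Real.exp (β * t) * ∑ x ∈ hK.toFinset,
            m x * (2 * (starRingEnd ℂ (u t x) * (-(schrodOp m b o c (u t) x))).re)
              * Real.exp (ω x) ≤ 0 := by
    intro t ht
    have hkey := keyIneq m hm b hb0 hbsymm hbsum o ho1 hosymm c d hd_self hd_symm hd_tri
      hd_sum hd_intr s hs hjump K hK lam hlam ω κ hκ hlip (u t) (husupp t)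
    have hFneg : ∑ x ∈ hK.toFinset,
        m x * (2 * (starRingEnd ℂ (u t x) * (-(schrodOp m b o c (u t) x))).re) * Real.exp (ω x)
        = -2 * ∑ x ∈ hK.toFinset, m x * Real.exp (ω x) *
            (starRingEnd ℂ (u t x) * schrodOp m b o c (u t) x).re := by
      rw [Finset.mul_sum]
      refine Finset.sum_congr rfl (fun x _ => ?_)
      simp only [mul_neg, Complex.neg_re]
      ring
    rw [hFneg]
    have hE0 : (0:ℝ) < Real.exp (β * t) := Real.exp_pos _
    have h1 : β * (∑ x ∈ hK.toFinset, m x * ‖u t x‖ ^ 2 * Real.exp (ω x))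
        - 2 * ∑ x ∈ hK.toFinset, m x * Real.exp (ω x) *
            (starRingEnd ℂ (u t x) * schrodOp m b o c (u t) x).re ≤ 0 := by
      have : β = 2 * (lam - (Real.cosh (κ * s / 2) - 1) / s ^ 2) := by rw [hβdef]; ring
      rw [this]
      linarith [hkey]
    nlinarith [h1, hE0]
  -- wrap up via antitoneOn_of_deriv_nonpos
  apply antitoneOn_of_deriv_nonpos (convex_Ici 0)
  · apply ContinuousOn.mul
    · have hc : Continuous fun t : ℝ =>
          2 * lam * t - 2 * t / s ^ 2 * (Real.cosh (κ * s / 2) - 1) := by fun_prop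
      exact (Real.continuous_exp.comp hc).continuousOn
    · apply continuousOn_finset_sum
      intro x hx
      have hxK : x ∈ K := hK.mem_toFinset.1 hx
      exact (continuousOn_const.mul
        ((continuous_norm.comp_continuousOn (hucont x hxK)).pow 2)).mul
        continuousOn_const
  · rw [interior_Ici]
    intro t ht
    exact ((hderiv t ht).differentiableAt).differentiableWithinAt
  · rw [interior_Ici]
    intro t ht
    rw [(hderiv t ht).deriv]
    exact hdnn t ht
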